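/- arXiv:1912.01765 — 4 statements merged into one kernel-verified Lean document; each statement's English description precedes it below -/
import Mathlib

section
/- Let f : [0,1]^N → ℝ be a continuous function that is totally symmetric (here d = 1). Define g : ℝ → ℝ^{N+1} by g(x) = (1, x, x^2, …, x^N). Then there exists a continuous function φ : ℝ^{N+1} → ℝ such that f(x_1,…,x_N) = φ(∑_{j=1}^N g(x_j)) for all (x_1,…,x_N) ∈ [0,1]^N. -/
set_option maxRecDepth 8000

open MvPolynomial Finset

lemma aeval_psum' {N : ℕ} (x : Fin N → ℝ) (k : ℕ) :
    MvPolynomial.aeval x (psum (Fin N) ℝ k) = ∑ i, x i ^ k := by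
  simp [psum]

lemma esymm_eval_eq' {N : ℕ} {x y : Fin N → ℝ}
    (h : ∀ k ≤ N, ∑ i, x i ^ k = ∑ i, y i ^ k) :
    ∀ k ≤ N, MvPolynomial.aeval x (esymm (Fin N) ℝ k) =
      MvPolynomial.aeval y (esymm (Fin N) ℝ k) := by
  intro k
  induction k using Nat.strong_induction_on with
  | _ k ih =>
    intro hk
    rcases Nat.eq_zero_or_pos k with rfl | hk0
    · simp
    have hx := congrArg (MvPolynomial.aeval x) (MvPolynomial.mul_esymm_eq_sum (Fin N) ℝ k)
    have hy := congrArg (MvPolynomial.aeval y) (MvPolynomial.mul_esymm_eq_sum (Fin N) ℝ k)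
    simp only [map_mul, map_natCast, map_pow, map_neg, map_one, map_sum, aeval_psum'] at hx hy
    have hsum : ∑ a ∈ (antidiagonal k).filter (fun a => a.1 < k),
          ((-1:ℝ))^a.1 * MvPolynomial.aeval x (esymm (Fin N) ℝ a.1) * (∑ i, x i ^ a.2)
        = ∑ a ∈ (antidiagonal k).filter (fun a => a.1 < k),
          ((-1:ℝ))^a.1 * MvPolynomial.aeval y (esymm (Fin N) ℝ a.1) * (∑ i, y i ^ a.2) := by
      refine Finset.sum_congr rfl fun a ha => ?_
      simp only [Finset.mem_filter, Finset.HasAntidiagonal.mem_antidiagonal] at ha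
      rw [ih a.1 ha.2 (le_trans (le_of_lt ha.2) hk), h a.2 (by omega)]
    have hkey : (k:ℝ) * MvPolynomial.aeval x (esymm (Fin N) ℝ k)
        = (k:ℝ) * MvPolynomial.aeval y (esymm (Fin N) ℝ k) := by
      rw [hx, hy, hsum]
    exact mul_left_cancel₀ (Nat.cast_ne_zero.mpr hk0.ne') hkey

lemma multiset_eq' {N : ℕ} {x y : Fin N → ℝ}
    (h : ∀ k ≤ N, ∑ i, x i ^ k = ∑ i, y i ^ k) :
    Finset.univ.val.map x = Finset.univ.val.map y := by
  have h' : ∀ k ≤ N, ∑ i, (-x i) ^ k = ∑ i, (-y i) ^ k := by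
    intro k hk
    have hz : ∀ z : Fin N → ℝ, ∑ i, (-z i) ^ k = (-1 : ℝ)^k * ∑ i, z i ^ k := by
      intro z
      rw [Finset.mul_sum]
      exact Finset.sum_congr rfl fun i _ => by rw [neg_pow]
    rw [hz, hz, h k hk]
  have he : ∀ k ≤ N,
      (Finset.univ.val.map (fun i => -x i)).esymm k
        = (Finset.univ.val.map (fun i => -y i)).esymm k := by
    intro k hk
    have := esymm_eval_eq' h' k hk
    rwa [MvPolynomial.aeval_esymm_eq_multiset_esymm, MvPolynomial.aeval_esymm_eq_multiset_esymm]
      at this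
  have cardx : Multiset.card (Finset.univ.val.map (fun i => -x i)) = N := by simp
  have cardy : Multiset.card (Finset.univ.val.map (fun i => -y i)) = N := by simp
  have hrw : ∀ z : Fin N → ℝ,
      ((Finset.univ.val.map z).map fun a => Polynomial.X - Polynomial.C a).prod
        = ((Finset.univ.val.map (fun i => -z i)).map fun r => Polynomial.X + Polynomial.C r).prod := by
    intro z
    rw [Multiset.map_map, Multiset.map_map]
    congr 1
    apply Multiset.map_congr rfl
    intro i _
    simp [sub_eq_add_neg]
  have hp : ((Finset.univ.val.map x).map fun a => Polynomial.X - Polynomial.C a).prod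
      = ((Finset.univ.val.map y).map fun a => Polynomial.X - Polynomial.C a).prod := by
    rw [hrw, hrw, Multiset.prod_X_add_C_eq_sum_esymm, Multiset.prod_X_add_C_eq_sum_esymm,
      cardx, cardy]
    refine Finset.sum_congr rfl fun j hj => ?_
    rw [he j (by simpa using Nat.lt_succ_iff.mp (Finset.mem_range.mp hj))]
  calc Finset.univ.val.map x
      = ((Finset.univ.val.map x).map fun a => Polynomial.X - Polynomial.C a).prod.roots :=
        (Polynomial.roots_multiset_prod_X_sub_C _).symm
    _ = ((Finset.univ.val.map y).map fun a => Polynomial.X - Polynomial.C a).prod.roots := by rw [hp]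
    _ = Finset.univ.val.map y := Polynomial.roots_multiset_prod_X_sub_C _

lemma exists_perm' {N : ℕ} (x y : Fin N → ℝ)
    (h : Finset.univ.val.map x = Finset.univ.val.map y) :
    ∃ σ : Equiv.Perm (Fin N), x = y ∘ σ := by
  have hmono : ∀ u v : Fin N → ℝ, Monotone u → Monotone v →
      Finset.univ.val.map u = Finset.univ.val.map v → u = v := by
    intro u v hu hv huv
    rw [Fin.univ_val_map, Fin.univ_val_map] at huv
    have : List.ofFn u = List.ofFn v :=
      List.Perm.eq_of_sortedLE hu.sortedLE_ofFn hv.sortedLE_ofFn (Multiset.coe_eq_coe.mp huv)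
    exact List.ofFn_injective this
  have hperm : ∀ (u : Fin N → ℝ) (τ : Equiv.Perm (Fin N)),
      Finset.univ.val.map (u ∘ τ) = Finset.univ.val.map u := by
    intro u τ
    have : Finset.univ.val.map (⇑τ) = Finset.univ.val := by
      have := Finset.map_univ_equiv τ
      calc Finset.univ.val.map (⇑τ) = (Finset.univ.map τ.toEmbedding).val := rfl
        _ = Finset.univ.val := by rw [this]
    rw [show (u ∘ ⇑τ) = u ∘ ⇑τ from rfl, ← Multiset.map_map u (⇑τ), this]
  set σx := Tuple.sort x
  set σy := Tuple.sort y
  have hx : Monotone (x ∘ σx) := Tuple.monotone_sort x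
  have hy : Monotone (y ∘ σy) := Tuple.monotone_sort y
  have heq : x ∘ σx = y ∘ σy := by
    apply hmono _ _ hx hy
    rw [hperm, hperm, h]
  refine ⟨σx.symm.trans σy, ?_⟩
  funext i
  have := congrFun heq (σx.symm i)
  simpa using this


/-- For a continuous totally symmetric `f : [0,1]^N → ℝ` (case `d = 1`), with
`g(x) = (1, x, x², …, x^N)`, there is a continuous `φ : ℝ^(N+1) → ℝ` such that
`f(x₁,…,x_N) = φ(∑ⱼ g(xⱼ))` on `[0,1]^N`. -/
theorem symmetric_deepsets_d1
    (N : ℕ) (f : (Fin N → ℝ) → ℝ)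
    (hf : ContinuousOn f {x : Fin N → ℝ | ∀ i, x i ∈ Set.Icc (0 : ℝ) 1})
    (hsym : ∀ (σ : Equiv.Perm (Fin N)) (x : Fin N → ℝ),
      (∀ i, x i ∈ Set.Icc (0 : ℝ) 1) → f (x ∘ σ) = f x)
    (g : ℝ → Fin (N + 1) → ℝ)
    (hg : ∀ (x : ℝ) (q : Fin (N + 1)), g x q = x ^ (q : ℕ)) :
    ∃ φ : (Fin (N + 1) → ℝ) → ℝ, Continuous φ ∧
      ∀ x : Fin N → ℝ, (∀ i, x i ∈ Set.Icc (0 : ℝ) 1) →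
        f x = φ (∑ j, g (x j)) := by
  classical
  set D : Set (Fin N → ℝ) := {x | ∀ i, x i ∈ Set.Icc (0 : ℝ) 1} with hD
  set E : (Fin N → ℝ) → (Fin (N + 1) → ℝ) := fun x => ∑ j, g (x j) with hE
  have hEq : ∀ (x : Fin N → ℝ) (q : Fin (N + 1)), E x q = ∑ j, x j ^ (q : ℕ) := by
    intro x q
    rw [hE]
    simp only [Finset.sum_apply]
    exact Finset.sum_congr rfl fun j _ => hg (x j) q
  have hEc : Continuous E := by
    have : E = fun (x : Fin N → ℝ) (q : Fin (N + 1)) => ∑ j, x j ^ (q : ℕ) := by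
      funext x q; exact hEq x q
    rw [this]
    exact continuous_pi fun q => continuous_finset_sum _ fun j _ => (continuous_apply j).pow _
  have key : ∀ x ∈ D, ∀ y ∈ D, E x = E y → f x = f y := by
    intro x hx y hy hxy
    have hps : ∀ k ≤ N, ∑ i, x i ^ k = ∑ i, y i ^ k := by
      intro k hk
      have h1 := hEq x ⟨k, by omega⟩
      have h2 := hEq y ⟨k, by omega⟩
      have := congrFun hxy ⟨k, by omega⟩
      rw [h1, h2] at this
      exact this
    obtain ⟨σ, hσ⟩ := exists_perm' x y (multiset_eq' hps)
    rw [hσ]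
    exact hsym σ y hy
  have hDcomp : IsCompact D := by
    have : D = Set.pi Set.univ (fun _ : Fin N => Set.Icc (0 : ℝ) 1) := by
      ext z; simp [hD, Set.mem_pi, Pi.le_def, Set.mem_Icc, forall_and]
    rw [this]
    exact isCompact_univ_pi fun _ => isCompact_Icc
  set K : Set (Fin (N + 1) → ℝ) := E '' D with hK
  have hKcomp : IsCompact K := hDcomp.image hEc
  have hKclosed : IsClosed K := hKcomp.isClosed
  let r : D → K := fun x => ⟨E x, x.1, x.2, rfl⟩
  have hrc : Continuous r := Continuous.subtype_mk (hEc.comp continuous_subtype_val) _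
  have hrsurj : Function.Surjective r := by
    rintro ⟨-, x, hx, rfl⟩
    exact ⟨⟨x, hx⟩, rfl⟩
  haveI : CompactSpace D := isCompact_iff_compactSpace.mp hDcomp
  have hq : Topology.IsQuotientMap r := (hrc.isClosedMap).isQuotientMap hrc hrsurj
  let φ₀ : K → ℝ := fun k => f (Classical.choose k.2)
  have hφ₀r : ∀ x : D, φ₀ (r x) = f x.1 := by
    intro x
    obtain ⟨hmem, heq⟩ := Classical.choose_spec (r x).2
    exact key _ hmem _ x.2 heq
  have hφ₀c : Continuous φ₀ := by
    rw [hq.continuous_iff]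
    have : φ₀ ∘ r = fun x : D => f x.1 := funext hφ₀r
    rw [this]
    exact hf.restrict
  obtain ⟨Φ, hΦ⟩ := (ContinuousMap.mk φ₀ hφ₀c).exists_restrict_eq hKclosed
  refine ⟨Φ, Φ.continuous, ?_⟩
  intro x hx
  have h1 : Φ (E x) = φ₀ ⟨E x, x, hx, rfl⟩ := by
    have := congrFun (congrArg ContinuousMap.toFun hΦ) ⟨E x, x, hx, rfl⟩
    exact this
  have h2 : φ₀ (r ⟨x, hx⟩) = f x := hφ₀r ⟨x, hx⟩
  rw [show (∑ j, g (x j)) = E x from rfl, h1]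
  exact h2.symm
end

section
/- (Ryser's formula) Let A be an N×N real matrix. Then the permanent of A satisfies perm(A) = (−1)^N ∑_{∅ ≠ S ⊆ {1,…,N}} (−1)^{|S|} ∏_{i=1}^N ( ∑_{j ∈ S} A_{ij} ). -/
open Finset

theorem key_sup (N : ℕ) (T : Finset (Fin N)) :
    (∑ S : Finset (Fin N), if T ⊆ S then ((-1:ℝ)^S.card) else 0)
      = if T = univ then (-1:ℝ)^N else 0 := by
  rw [← Finset.sum_filter]
  rw [Finset.sum_nbij' (i := fun S => Sᶜ) (j := fun R => Rᶜ)
    (t := Tᶜ.powerset) (g := fun R => (-1:ℝ)^N * (-1:ℝ)^R.card)]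
  · rw [← Finset.mul_sum]
    have : (∑ R ∈ Tᶜ.powerset, ((-1:ℝ)) ^ R.card)
        = ((∑ R ∈ Tᶜ.powerset, ((-1:ℤ)) ^ R.card : ℤ) : ℝ) := by push_cast; rfl
    rw [this, Finset.sum_powerset_neg_one_pow_card]
    by_cases h : T = univ
    · simp [h]
    · have : Tᶜ ≠ ∅ := by
        simp [Finset.compl_eq_empty_iff, h]
      simp [h, this]
  · intro S hS; simp only [Finset.mem_filter, Finset.mem_univ, true_and] at hS
    simpa using hS
  · intro R hR; simp only [Finset.mem_powerset] at hR
    simp only [Finset.mem_filter, Finset.mem_univ, true_and]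
    rwa [← Finset.compl_subset_compl, compl_compl]
  · intro S _; simp
  · intro R _; simp
  · intro S hS
    have h2 : S.card ≤ N := by simpa using Finset.card_le_univ S
    have hc : Sᶜ.card + S.card = N := by
      have := Finset.card_compl S; simp [Fintype.card_fin] at this; omega
    have : ((-1:ℝ))^(Sᶜ.card) * ((-1:ℝ))^(Sᶜ.card) = 1 := by
      rw [← pow_add]; exact (neg_one_pow_eq_one_iff_even (by norm_num)).mpr ⟨_, rfl⟩
    calc ((-1:ℝ))^S.card = ((-1:ℝ))^(Sᶜ.card) * ((-1:ℝ))^(Sᶜ.card) * ((-1:ℝ))^S.card := by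
            rw [this, one_mul]
      _ = ((-1:ℝ))^N * ((-1:ℝ))^Sᶜ.card := by rw [mul_assoc, ← pow_add, hc]; ring

/-- **Ryser's formula.** -/
theorem ryser_formula (N : ℕ) (hN : 0 < N) (A : Matrix (Fin N) (Fin N) ℝ) :
    (∑ σ : Equiv.Perm (Fin N), ∏ i, A i (σ i)) =
      (-1 : ℝ) ^ N *
        ∑ S ∈ Finset.univ.powerset.filter (fun S : Finset (Fin N) => S.Nonempty),
          (-1 : ℝ) ^ S.card * ∏ i, ∑ j ∈ S, A i j := by
  classical
  have h1 : ∑ S ∈ Finset.univ.powerset.filter (fun S : Finset (Fin N) => S.Nonempty),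
        (-1 : ℝ) ^ S.card * ∏ i, ∑ j ∈ S, A i j
      = ∑ S : Finset (Fin N), (-1 : ℝ) ^ S.card * ∏ i, ∑ j ∈ S, A i j := by
    rw [Finset.sum_filter_of_ne, Finset.powerset_univ]
    intro S _ hne
    rcases S.eq_empty_or_nonempty with rfl | h
    · exfalso; apply hne
      have : (∏ i : Fin N, ∑ j ∈ (∅ : Finset (Fin N)), A i j) = 0 := by
        simp only [Finset.sum_empty]
        rw [Finset.prod_const, zero_pow]
        simp [hN.ne']
      rw [this, mul_zero]
    · exact h
  have h2 : ∀ S : Finset (Fin N), (∏ i, ∑ j ∈ S, A i j)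
      = ∑ f : Fin N → Fin N,
          if Finset.image f univ ⊆ S then ∏ i, A i (f i) else 0 := by
    intro S
    rw [Finset.prod_univ_sum (fun _ => S) (fun i j => A i j)]
    rw [← Finset.sum_filter]
    apply Finset.sum_congr _ (fun _ _ => rfl)
    ext f
    simp only [Fintype.mem_piFinset, Finset.mem_filter, Finset.mem_univ, true_and,
      Finset.image_subset_iff]
    tauto
  have h3 : ∀ f : Fin N → Fin N,
      (∑ S : Finset (Fin N), (-1:ℝ)^S.card *
          if Finset.image f univ ⊆ S then ∏ i, A i (f i) else 0)
      = (if Finset.image f univ = univ then (-1:ℝ)^N else 0) * ∏ i, A i (f i) := by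
    intro f
    rw [← key_sup N (Finset.image f univ), Finset.sum_mul]
    apply Finset.sum_congr rfl
    intro S _
    by_cases h : Finset.image f univ ⊆ S <;> simp [h]
  rw [h1]
  symm
  calc
    (-1 : ℝ) ^ N * ∑ S : Finset (Fin N), (-1 : ℝ) ^ S.card * ∏ i, ∑ j ∈ S, A i j
        = (-1 : ℝ) ^ N * ∑ S : Finset (Fin N), ∑ f : Fin N → Fin N,
            (-1:ℝ)^S.card * if Finset.image f univ ⊆ S then ∏ i, A i (f i) else 0 := by
          congr 1; apply Finset.sum_congr rfl; intro S _; rw [h2, Finset.mul_sum]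
    _ = (-1 : ℝ) ^ N * ∑ f : Fin N → Fin N, ∑ S : Finset (Fin N),
            (-1:ℝ)^S.card * if Finset.image f univ ⊆ S then ∏ i, A i (f i) else 0 := by
          rw [Finset.sum_comm]
    _ = (-1 : ℝ) ^ N * ∑ f : Fin N → Fin N,
            (if Finset.image f univ = univ then (-1:ℝ)^N else 0) * ∏ i, A i (f i) := by
          congr 1; exact Finset.sum_congr rfl fun f _ => h3 f
    _ = ∑ f : Fin N → Fin N,
            (if Function.Bijective f then 1 else 0) * ∏ i, A i (f i) := by
          rw [Finset.mul_sum]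
          apply Finset.sum_congr rfl
          intro f _
          rw [← mul_assoc]
          congr 1
          have hsb : Finset.image f univ = univ ↔ Function.Bijective f := by
            rw [← Finset.coe_injective.eq_iff]
            simp only [Finset.coe_image, Finset.coe_univ, Set.image_univ]
            rw [Set.range_eq_univ]
            constructor
            · intro hs; exact ⟨Finite.injective_iff_surjective.mpr hs, hs⟩
            · intro hb; exact hb.2
          by_cases h : Function.Bijective f
          · rw [if_pos (hsb.mpr h), if_pos h, ← pow_add]
            simp [← two_mul, pow_mul]
          · rw [if_neg (fun hh => h (hsb.mp hh)), if_neg h, mul_zero]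
    _ = ∑ σ : Equiv.Perm (Fin N), ∏ i, A i (σ i) := by
          simp_rw [ite_mul, one_mul, zero_mul]
          rw [← Finset.sum_filter]
          symm
          refine Finset.sum_bij (fun (σ : Equiv.Perm (Fin N)) _ => (σ : Fin N → Fin N)) ?_ ?_ ?_ ?_
          · intro σ _
            simp only [Finset.mem_filter, Finset.mem_univ, true_and]
            exact σ.bijective
          · intro σ _ τ _ h
            exact Equiv.coe_fn_injective h
          · intro f hf
            simp only [Finset.mem_filter, Finset.mem_univ, true_and] at hf
            exact ⟨Equiv.ofBijective f hf, Finset.mem_univ _, rfl⟩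
          · intro σ _; rfl
end

section
/- Let f ∈ ℝ[x_1,…,x_N] be an anti-symmetric polynomial in N real variables, i.e. f(x_{σ(1)},…,x_{σ(N)}) = sgn(σ)·f(x_1,…,x_N) for every permutation σ ∈ S_N. Then there exists a symmetric polynomial U ∈ ℝ[x_1,…,x_N] such that f(x_1,…,x_N) = U(x_1,…,x_N) · ∏_{1 ≤ i < j ≤ N} (x_i − x_j). -/
open MvPolynomial Finset

noncomputable section CauchyAux

namespace CauchyAux

variable {n : ℕ}

/-- Isomorphism singling out the variable `j`. -/
def phi (j : Fin (n+1)) :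
    MvPolynomial (Fin (n+1)) ℝ ≃ₐ[ℝ] Polynomial (MvPolynomial (Fin n) ℝ) :=
  (renameEquiv ℝ (finSuccEquiv' j)).trans (optionEquivLeft ℝ (Fin n))

lemma phi_X_self (j : Fin (n+1)) : phi j (X j) = Polynomial.X := by
  simp [phi, renameEquiv_apply, finSuccEquiv'_at, optionEquivLeft_X_none]

lemma phi_X_succAbove (j : Fin (n+1)) (k : Fin n) :
    phi j (X (j.succAbove k)) = Polynomial.C (X k) := by
  simp [phi, renameEquiv_apply, finSuccEquiv'_succAbove, optionEquivLeft_X_some]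

/-- The ring hom substituting `c` for the variable `j`. -/
def Emap (j : Fin (n+1)) (c : MvPolynomial (Fin n) ℝ) :
    MvPolynomial (Fin (n+1)) ℝ →+* MvPolynomial (Fin n) ℝ :=
  (Polynomial.evalRingHom c).comp (phi j).toAlgHom.toRingHom

lemma Emap_X_self (j : Fin (n+1)) (c : MvPolynomial (Fin n) ℝ) :
    Emap j c (X j) = c := by
  simp [Emap, phi_X_self]

lemma Emap_X_succAbove (j : Fin (n+1)) (c : MvPolynomial (Fin n) ℝ) (k : Fin n) :
    Emap j c (X (j.succAbove k)) = X k := by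
  simp [Emap, phi_X_succAbove]

lemma dvd_of_swap_neg (i j : Fin (n+1)) (hij : i ≠ j)
    (f : MvPolynomial (Fin (n+1)) ℝ)
    (hf : rename (Equiv.swap i j) f = -f) :
    (X i - X j : MvPolynomial (Fin (n+1)) ℝ) ∣ f := by
  obtain ⟨i', hi'⟩ := Fin.exists_succAbove_eq hij
  set c : MvPolynomial (Fin n) ℝ := X i' with hc
  have hEi : Emap j c (X i) = c := by rw [← hi', Emap_X_succAbove]
  have hcomp : (Emap j c).comp (rename (Equiv.swap i j)).toRingHom = Emap j c := by
    apply ringHom_ext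
    · intro r
      simp [Emap, phi, renameEquiv_apply, optionEquivLeft_C]
    · intro m
      simp only [RingHom.comp_apply, AlgHom.toRingHom_eq_coe, RingHom.coe_coe, rename_X]
      rcases eq_or_ne m i with rfl | hmi
      · rw [Equiv.swap_apply_left, Emap_X_self, hEi]
      rcases eq_or_ne m j with rfl | hmj
      · rw [Equiv.swap_apply_right, hEi, Emap_X_self]
      · rw [Equiv.swap_apply_of_ne_of_ne hmi hmj]
  have h0 : Emap j c f = 0 := by
    have h1 := RingHom.congr_fun hcomp f
    simp only [RingHom.comp_apply, AlgHom.toRingHom_eq_coe, RingHom.coe_coe] at h1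
    rw [hf, map_neg] at h1
    have h2 : (2 : MvPolynomial (Fin n) ℝ) * Emap j c f = 0 := by
      linear_combination -h1
    rcases mul_eq_zero.mp h2 with h | h
    · exact absurd h two_ne_zero
    · exact h
  have hroot : Polynomial.X - Polynomial.C c ∣ phi j f :=
    Polynomial.dvd_iff_isRoot.mpr h0
  have hdvd : phi j (X i - X j) ∣ phi j f := by
    have : phi j (X i - X j) = -(Polynomial.X - Polynomial.C c) := by
      rw [map_sub, ← hi', phi_X_succAbove, phi_X_self, hc]; ring
    rw [this]
    exact (neg_dvd).mpr hroot
  have := map_dvd (phi j).symm hdvd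
  simpa using this

lemma prime_X_sub_X (i j : Fin (n+1)) (hij : i ≠ j) :
    Prime (X i - X j : MvPolynomial (Fin (n+1)) ℝ) := by
  obtain ⟨i', hi'⟩ := Fin.exists_succAbove_eq hij
  have h : phi j (X i - X j) = -(Polynomial.X - Polynomial.C (X i')) := by
    rw [map_sub, ← hi', phi_X_succAbove, phi_X_self]; ring
  rw [← MulEquiv.prime_iff (phi j).toRingEquiv.toMulEquiv]
  show Prime (phi j (X i - X j))
  rw [h]
  exact (Polynomial.prime_X_sub_C _).neg

lemma X_sub_X_ne_zero {σ : Type*} (a b : σ) (hab : a ≠ b) :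
    (X a - X b : MvPolynomial σ ℝ) ≠ 0 :=
  sub_ne_zero.mpr (fun h => hab (X_injective h))

lemma not_dvd_X_sub_X (i j k l : Fin (n+1)) (hij : i ≠ j) (hkl : k ≠ l)
    (h1 : ¬(i = k ∧ j = l)) (h2 : ¬(i = l ∧ j = k)) :
    ¬ ((X k - X l : MvPolynomial (Fin (n+1)) ℝ) ∣ (X i - X j)) := by
  obtain ⟨k', hk'⟩ := Fin.exists_succAbove_eq hkl
  set c : MvPolynomial (Fin n) ℝ := X k' with hc
  intro hdvd
  have hker : Emap l c (X k - X l) = 0 := by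
    rw [map_sub, ← hk', Emap_X_succAbove, Emap_X_self]
    simp [hc]
  have h0 : Emap l c (X i - X j) = 0 := by
    obtain ⟨t, ht⟩ := hdvd
    rw [ht, map_mul, hker, zero_mul]
  -- now compute Emap l c (X i - X j) and show it is nonzero
  have hEm : ∀ m : Fin (n+1), m ≠ l → ∃ m', l.succAbove m' = m ∧ Emap l c (X m) = X m' := by
    intro m hm
    obtain ⟨m', hm'⟩ := Fin.exists_succAbove_eq hm
    exact ⟨m', hm', by rw [← hm', Emap_X_succAbove]⟩
  rcases eq_or_ne i l with rfl | hil
  · -- i = l : Emap (X i) = c = X k', j ≠ l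
    have hjl : j ≠ i := Ne.symm hij
    obtain ⟨j', hj', hEj⟩ := hEm j hjl
    rw [map_sub, Emap_X_self, hEj, hc] at h0
    have : k' ≠ j' := by
      intro h; apply h2
      refine ⟨rfl, ?_⟩
      rw [← hj', ← h, hk']
    exact X_sub_X_ne_zero k' j' this h0
  · obtain ⟨i', hi', hEi⟩ := hEm i hil
    rcases eq_or_ne j l with rfl | hjl
    · rw [map_sub, Emap_X_self, hEi, hc] at h0
      have : i' ≠ k' := by
        intro h; apply h1
        refine ⟨?_, rfl⟩
        rw [← hi', h, hk']
      exact X_sub_X_ne_zero i' k' this h0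
    · obtain ⟨j', hj', hEj⟩ := hEm j hjl
      rw [map_sub, hEi, hEj] at h0
      have : i' ≠ j' := by
        intro h; apply hij; rw [← hi', ← hj', h]
      exact X_sub_X_ne_zero i' j' this h0

lemma prod_primes_dvd' {R : Type*} [CommRing R] {ι : Type*} [DecidableEq ι]
    (s : Finset ι) (g : ι → R) (f : R)
    (hp : ∀ p ∈ s, Prime (g p))
    (hd : ∀ p ∈ s, g p ∣ f)
    (hnd : ∀ p ∈ s, ∀ q ∈ s, p ≠ q → ¬ g p ∣ g q) :
    (∏ p ∈ s, g p) ∣ f := by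
  induction s using Finset.induction_on generalizing f with
  | empty => simp
  | @insert a t ha ih =>
    obtain ⟨f', rfl⟩ := hd a (mem_insert_self a t)
    rw [prod_insert ha]
    refine mul_dvd_mul_left _ (ih f' (fun p hp' => hp p (mem_insert_of_mem hp'))
      (fun p hp' => ?_)
      (fun p hp' q hq' hpq => hnd p (mem_insert_of_mem hp') q (mem_insert_of_mem hq') hpq) )
    have hpa : p ≠ a := by rintro rfl; exact ha hp'
    have hprime := hp p (mem_insert_of_mem hp')
    have hpd : g p ∣ g a * f' := hd p (mem_insert_of_mem hp')
    rcases hprime.dvd_or_dvd hpd with h | h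
    · exact absurd h (hnd p (mem_insert_of_mem hp') a (mem_insert_self a t) hpa)
    · exact h

lemma prod_pairs_eq {R : Type*} [CommMonoid R] {N : ℕ} (F : Fin N → Fin N → R) :
    ∏ p ∈ (univ ×ˢ univ).filter (fun p : Fin N × Fin N => p.1 < p.2), F p.1 p.2
      = ∏ i : Fin N, ∏ j ∈ Ioi i, F i j := by
  rw [prod_filter, prod_product]
  refine prod_congr rfl fun i _ => ?_
  show (∏ y : Fin N, if i < y then F i y else 1) = _
  rw [← prod_filter]
  refine prod_congr ?_ (fun j _ => rfl)
  ext j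
  simp [mem_Ioi]

lemma vand_eq {R : Type*} [CommRing R] {N : ℕ} (v : Fin N → R) :
    ∏ i : Fin N, ∏ j ∈ Ioi i, (v i - v j)
      = (∏ i : Fin N, ∏ j ∈ Ioi i, (-1 : R)) * Matrix.det (Matrix.vandermonde v) := by
  rw [Matrix.det_vandermonde, ← Finset.prod_mul_distrib]
  refine prod_congr rfl fun i _ => ?_
  rw [← Finset.prod_mul_distrib]
  refine prod_congr rfl fun j _ => ?_
  ring

lemma rename_vandermonde {N : ℕ} (σ : Equiv.Perm (Fin N)) :
    rename σ (∏ i : Fin N, ∏ j ∈ Ioi i, (X i - X j : MvPolynomial (Fin N) ℝ))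
      = (Equiv.Perm.sign σ : ℤ) •
        ∏ i : Fin N, ∏ j ∈ Ioi i, (X i - X j : MvPolynomial (Fin N) ℝ) := by
  have h1 : rename σ (∏ i : Fin N, ∏ j ∈ Ioi i, (X i - X j : MvPolynomial (Fin N) ℝ))
      = ∏ i : Fin N, ∏ j ∈ Ioi i, (X (σ i) - X (σ j) : MvPolynomial (Fin N) ℝ) := by
    rw [map_prod]
    refine prod_congr rfl fun i _ => ?_
    rw [map_prod]
    refine prod_congr rfl fun j _ => ?_
    rw [map_sub, rename_X, rename_X]
  have h2 : Matrix.vandermonde (fun k : Fin N => (X (σ k) : MvPolynomial (Fin N) ℝ))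
      = (Matrix.vandermonde (fun k : Fin N => (X k : MvPolynomial (Fin N) ℝ))).submatrix σ id := by
    ext a b
    simp [Matrix.vandermonde_apply, Matrix.submatrix_apply]
  rw [h1, vand_eq (fun k => X (σ k)), h2, Matrix.det_permute,
    vand_eq (fun k : Fin N => (X k : MvPolynomial (Fin N) ℝ))]
  rw [zsmul_eq_mul]
  push_cast
  ring

end CauchyAux

end CauchyAux

open CauchyAux in
/-- **Cauchy's factorization.**  Every anti-symmetric polynomial
`f ∈ ℝ[x₁,…,x_N]` factors as a symmetric polynomial times the Vandermonde
determinant `∏_{i<j} (xᵢ − xⱼ)`. -/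
theorem antisymmetric_polynomial_eq_symmetric_mul_vandermonde
    (N : ℕ) (f : MvPolynomial (Fin N) ℝ)
    (hanti : ∀ σ : Equiv.Perm (Fin N),
      MvPolynomial.rename σ f = (Equiv.Perm.sign σ : ℤ) • f) :
    ∃ U : MvPolynomial (Fin N) ℝ, U.IsSymmetric ∧
      f = U * ∏ i : Fin N, ∏ j ∈ Finset.Ioi i,
        (MvPolynomial.X i - MvPolynomial.X j) := by
  classical
  set V : MvPolynomial (Fin N) ℝ :=
    ∏ i : Fin N, ∏ j ∈ Finset.Ioi i, (MvPolynomial.X i - MvPolynomial.X j) with hV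
  cases N with
  | zero =>
    refine ⟨f, fun σ => ?_, by simp [hV]⟩
    rw [hanti σ, Subsingleton.elim σ 1]
    simp
  | succ n =>
    -- divisibility
    have hdvd : V ∣ f := by
      rw [hV, ← prod_pairs_eq (fun i j => (X i - X j : MvPolynomial (Fin (n+1)) ℝ))]
      refine prod_primes_dvd' _ _ f ?_ ?_ ?_
      · rintro ⟨i, j⟩ hp
        simp only [Finset.mem_filter] at hp
        exact prime_X_sub_X i j hp.2.ne
      · rintro ⟨i, j⟩ hp
        simp only [Finset.mem_filter] at hp
        have hij : i ≠ j := hp.2.ne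
        refine dvd_of_swap_neg i j hij f ?_
        rw [hanti (Equiv.swap i j), Equiv.Perm.sign_swap hij]
        simp
      · rintro ⟨i, j⟩ hp ⟨k, l⟩ hq hpq
        simp only [Finset.mem_filter] at hp hq
        have hij : i < j := hp.2
        have hkl : k < l := hq.2
        refine not_dvd_X_sub_X k l i j hkl.ne hij.ne ?_ ?_
        · rintro ⟨rfl, rfl⟩; exact hpq rfl
        · rintro ⟨rfl, rfl⟩; exact absurd (hkl.trans hij) (lt_irrefl _)
    obtain ⟨U, hU⟩ := hdvd
    have hVne : V ≠ 0 := by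
      rw [hV]
      refine Finset.prod_ne_zero_iff.mpr fun i _ => Finset.prod_ne_zero_iff.mpr fun j hj => ?_
      exact X_sub_X_ne_zero i j (Finset.mem_Ioi.mp hj).ne
    refine ⟨U, ?_, by rw [hU, mul_comm]⟩
    intro σ
    have hmain : rename σ f = rename σ V * rename σ U := by
      rw [hU, map_mul]
    rw [hanti σ, rename_vandermonde σ, ← hV, hU] at hmain
    have hsign : ((Equiv.Perm.sign σ : ℤ) : MvPolynomial (Fin (n+1)) ℝ) ≠ 0 := by
      exact_mod_cast Int.cast_ne_zero.mpr (Units.ne_zero _)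
    rw [zsmul_eq_mul, zsmul_eq_mul] at hmain
    -- hmain : sgn * (V * U) = sgn * V * rename σ U
    have : V * ((Equiv.Perm.sign σ : ℤ) : MvPolynomial (Fin (n+1)) ℝ) * U
        = V * ((Equiv.Perm.sign σ : ℤ) : MvPolynomial (Fin (n+1)) ℝ) * rename σ U := by
      ring_nf
      ring_nf at hmain
      linear_combination hmain
    have hcancel := mul_left_cancel₀ (mul_ne_zero hVne hsign) this
    exact hcancel.symm
end

section
/- Let f : ([0,1]^d)^N → ℝ be a totally symmetric function that is Lipschitz with constant L with respect to the ℓ∞ norm on ℝ^{Nd}, i.e. |f(X) − f(X')| ≤ L·max_{i,α} |x_{i,α} − x'_{i,α}|. Then there is a constant C > 0 (depending on f, N, d but not on ε) such that for every sufficiently small ε > 0 there exist a natural number M, a function g : ℝ^d → ℝ^M and a function φ : ℝ^M → ℝ such that |f(x_1,…,x_N) − φ(∑_{j=1}^N g(x_j))| ≤ ε for all (x_1,…,x_N) ∈ ([0,1]^d)^N, with M ≤ C · 2^N L^{Nd} / (ε^{Nd} · N!). -/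
/-!
Quantize each particle to its cell in a grid of mesh `1/K` on `[0,1]^d` and let `g` be the
one-hot encoding of that cell, so that `∑ⱼ g(xⱼ)` is the histogram of occupied cells. Two
configurations with the same histogram agree cell by cell after permuting the particles, so by
symmetry and the Lipschitz bound `f` varies by at most `L/K` among them, and `φ` may evaluate
`f` at any configuration with the given histogram. Taking `K = ⌈L/ε⌉` gives
`M = (K+1)^d ≤ (3L/ε)^d`, within the required bound once `N ≥ 1` and `ε < L`.
-/

open Set

theorem exists_perm_comp_eq_of_sum_single_eq {ι S R : Type*} [Fintype ι] [DecidableEq S]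
    [AddCommMonoidWithOne R] [CharZero R] {a b : ι → S}
    (h : ∑ j, (Pi.single (a j) 1 : S → R) = ∑ j, Pi.single (b j) 1) :
    ∃ σ : Equiv.Perm ι, b ∘ σ = a := by
  have hfiber : ∀ s, Fintype.card {j // a j = s} = Fintype.card {j // b j = s} := by
    intro s
    have hs := congrFun h s
    simp only [Finset.sum_apply, Pi.single_apply, Finset.sum_boole] at hs
    simpa [Fintype.card_subtype, eq_comm] using hs
  exact ⟨Equiv.ofFiberEquiv fun s => Fintype.equivOfCardEq (hfiber s),
    funext (Equiv.ofFiberEquiv_map _)⟩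

theorem exists_approx_comp_histogram {E S : Type*} [Fintype S] [DecidableEq S] {N : ℕ}
    (D : Set E) (q : E → S) (f : (Fin N → E) → ℝ) {ε : ℝ}
    (hsym : ∀ (σ : Equiv.Perm (Fin N)) X, (∀ i, X i ∈ D) → f (X ∘ σ) = f X)
    (hq : ∀ X X', (∀ i, X i ∈ D) → (∀ i, X' i ∈ D) → q ∘ X = q ∘ X' → |f X - f X'| ≤ ε) :
    ∃ φ : (S → ℝ) → ℝ, ∀ X, (∀ i, X i ∈ D) → |f X - φ (∑ j, Pi.single (q (X j)) 1)| ≤ ε := by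
  classical
  let histogram (X : Fin N → E) : S → ℝ := ∑ j, Pi.single (q (X j)) 1
  refine ⟨fun h => if hX : ∃ X, (∀ i, X i ∈ D) ∧ histogram X = h then f hX.choose else 0,
    fun X hX => ?_⟩
  have hrealized : ∃ X', (∀ i, X' i ∈ D) ∧ histogram X' = histogram X := ⟨X, hX, rfl⟩
  obtain ⟨hX', hsum⟩ := hrealized.choose_spec
  set X' := hrealized.choose
  obtain ⟨σ, hσ⟩ := exists_perm_comp_eq_of_sum_single_eq (a := q ∘ X) (b := q ∘ X') hsum.symm
  simp only [histogram, dif_pos hrealized]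
  rw [← hsym σ X' hX']
  exact hq X (X' ∘ σ) hX (fun i => hX' (σ i)) hσ.symm

/-- The grid has `K + 1` cells since `t = 1` has floor `K`; on `[0,1]` no reduction mod `K + 1`
occurs (`val_unitCell`). -/
noncomputable def unitCell (K : ℕ) (t : ℝ) : Fin (K + 1) := Fin.ofNat (K + 1) ⌊t * K⌋₊

lemma val_unitCell {K : ℕ} {t : ℝ} (ht : t ∈ Icc (0 : ℝ) 1) : (unitCell K t : ℕ) = ⌊t * K⌋₊ := by
  rw [unitCell, Fin.val_ofNat, Nat.mod_eq_of_lt (Nat.lt_succ_of_le (Nat.floor_le_of_le ?_))]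
  nlinarith [ht.1, ht.2, (K.cast_nonneg : (0 : ℝ) ≤ K)]

lemma abs_sub_le_of_unitCell_eq {K : ℕ} (hK : 0 < K) {t t' : ℝ} (ht : t ∈ Icc (0 : ℝ) 1)
    (ht' : t' ∈ Icc (0 : ℝ) 1) (h : unitCell K t = unitCell K t') : |t - t'| ≤ 1 / K := by
  have hfloor : ⌊t * K⌋ = ⌊t' * K⌋ := by
    rw [← Int.natCast_floor_eq_floor (by have := ht.1; positivity),
      ← Int.natCast_floor_eq_floor (by have := ht'.1; positivity),
      ← val_unitCell ht, ← val_unitCell ht', h]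
  have hlt := Int.abs_sub_lt_one_of_floor_eq_floor hfloor
  rw [← sub_mul, abs_mul, Nat.abs_cast] at hlt
  rw [le_div_iff₀ (by exact_mod_cast hK)]
  exact hlt.le

noncomputable def gridCell {d : ℕ} (K : ℕ) (x : Fin d → ℝ) : Fin ((K + 1) ^ d) :=
  finFunctionFinEquiv fun α => unitCell K (x α)

lemma norm_sub_le_of_gridCell_eq {N d K : ℕ} (hK : 0 < K) {X Y : Fin N → Fin d → ℝ}
    (hX : ∀ i α, X i α ∈ Icc (0 : ℝ) 1) (hY : ∀ i α, Y i α ∈ Icc (0 : ℝ) 1)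
    (h : gridCell K ∘ X = gridCell K ∘ Y) : ‖X - Y‖ ≤ 1 / K := by
  refine (pi_norm_le_iff_of_nonneg (by positivity)).2 fun i =>
    (pi_norm_le_iff_of_nonneg (by positivity)).2 fun α => ?_
  have hcell := congrFun (finFunctionFinEquiv.injective (congrFun h i)) α
  simpa only [Pi.sub_apply, Real.norm_eq_abs] using
    abs_sub_le_of_unitCell_eq hK (hX i α) (hY i α) hcell

lemma succ_ceil_pow_le {a : ℝ} (ha : 1 ≤ a) {d n : ℕ} (hdn : d ≤ n) :
    ((⌈a⌉₊ + 1 : ℕ) : ℝ) ^ d ≤ 3 ^ d * a ^ n := calc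
  ((⌈a⌉₊ + 1 : ℕ) : ℝ) ^ d ≤ (3 * a) ^ d := by
    gcongr
    push_cast
    linarith [Nat.ceil_lt_add_one (zero_le_one.trans ha)]
  _ = 3 ^ d * a ^ d := mul_pow _ _ _
  _ ≤ 3 ^ d * a ^ n := by gcongr

theorem exists_gridCell_approx_of_lipschitz {d N K : ℕ} (hK : 0 < K)
    (f : (Fin N → Fin d → ℝ) → ℝ) {L : ℝ} (hL : 0 ≤ L)
    (hsym : ∀ (σ : Equiv.Perm (Fin N)) (X : Fin N → Fin d → ℝ),
      (∀ i α, X i α ∈ Icc (0 : ℝ) 1) → f (X ∘ σ) = f X)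
    (hlip : ∀ X X' : Fin N → Fin d → ℝ,
      (∀ i α, X i α ∈ Icc (0 : ℝ) 1) → (∀ i α, X' i α ∈ Icc (0 : ℝ) 1) →
      |f X - f X'| ≤ L * ‖X - X'‖) :
    ∃ φ : (Fin ((K + 1) ^ d) → ℝ) → ℝ, ∀ X : Fin N → Fin d → ℝ,
      (∀ i α, X i α ∈ Icc (0 : ℝ) 1) →
        |f X - φ (∑ j, Pi.single (gridCell K (X j)) 1)| ≤ L / K :=
  exists_approx_comp_histogram {x : Fin d → ℝ | ∀ α, x α ∈ Icc (0 : ℝ) 1} (gridCell K) f hsym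
    fun X X' hX hX' hcell => calc
      |f X - f X'| ≤ L * ‖X - X'‖ := hlip X X' hX hX'
      _ ≤ L * (1 / K) := by gcongr; exact norm_sub_le_of_gridCell_eq hK hX hX' hcell
      _ = L / K := mul_one_div L K

/-- If `f : ([0,1]^d)^N → ℝ` is totally symmetric and Lipschitz with constant `L`
with respect to the `ℓ∞` norm on `ℝ^{Nd}`, then there is `C > 0` such that for all
sufficiently small `ε > 0`, `f` is `ε`-approximated on the cube in the form
`φ(∑ⱼ g(xⱼ))` with `M ≤ C · 2^N L^{Nd} / (ε^{Nd} · N!)` feature variables.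
(The norm on `Fin N → Fin d → ℝ` below is the sup norm over all `Nd` coordinates.) -/
theorem symmetric_universal_approximation_linfty_lipschitz
    (d N : ℕ) (f : (Fin N → Fin d → ℝ) → ℝ) (L : ℝ) (hL : 0 ≤ L)
    (hsym : ∀ (σ : Equiv.Perm (Fin N)) (X : Fin N → Fin d → ℝ),
      (∀ i α, X i α ∈ Set.Icc (0 : ℝ) 1) → f (X ∘ σ) = f X)
    (hlip : ∀ X X' : Fin N → Fin d → ℝ,
      (∀ i α, X i α ∈ Set.Icc (0 : ℝ) 1) → (∀ i α, X' i α ∈ Set.Icc (0 : ℝ) 1) →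
      |f X - f X'| ≤ L * ‖X - X'‖) :
    ∃ C : ℝ, 0 < C ∧ ∃ ε₀ : ℝ, 0 < ε₀ ∧
      ∀ ε : ℝ, 0 < ε → ε < ε₀ →
        ∃ (M : ℕ) (g : (Fin d → ℝ) → Fin M → ℝ) (φ : (Fin M → ℝ) → ℝ),
          (∀ X : Fin N → Fin d → ℝ, (∀ i α, X i α ∈ Set.Icc (0 : ℝ) 1) →
            |f X - φ (∑ j, g (X j))| ≤ ε) ∧
          (M : ℝ) ≤ C * 2 ^ N * L ^ (N * d) / (ε ^ (N * d) * (Nat.factorial N)) := by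
  by_cases hconst : L = 0 ∨ N = 0
  -- then `f` is constant on the cube and `M = 0` features suffice
  · refine ⟨1, one_pos, 1, one_pos, fun ε hε _ => ⟨0, 0, fun _ => f 0, fun X hX => ?_, ?_⟩⟩
    · have hzero : L * ‖X - 0‖ = 0 := by
        rcases hconst with rfl | rfl
        · exact zero_mul _
        · simp [Subsingleton.elim X 0]
      linarith [hlip X 0 hX fun _ _ => ⟨le_rfl, zero_le_one⟩]
    · rw [Nat.cast_zero]
      positivity
  obtain ⟨hL0, hN0⟩ := not_or.1 hconst
  have hLpos : 0 < L := hL.lt_of_ne' hL0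
  refine ⟨3 ^ d * N.factorial, by positivity, L, hLpos, fun ε hε hεL => ?_⟩
  have hLε : 1 ≤ L / ε := (one_le_div hε).2 hεL.le
  have hK : 0 < ⌈L / ε⌉₊ := Nat.ceil_pos.2 (by linarith)
  obtain ⟨φ, hφ⟩ := exists_gridCell_approx_of_lipschitz hK f hL hsym hlip
  refine ⟨_, fun x => Pi.single (gridCell ⌈L / ε⌉₊ x) 1, φ, fun X hX => (hφ X hX).trans ?_, ?_⟩
  · rw [div_le_iff₀ (by exact_mod_cast hK), mul_comm, ← div_le_iff₀ hε]
    exact Nat.le_ceil _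
  · have hN : d ≤ N * d := Nat.le_mul_of_pos_left d (Nat.pos_of_ne_zero hN0)
    calc ((⌈L / ε⌉₊ + 1) ^ d : ℕ) ≤ 3 ^ d * (L / ε) ^ (N * d) := by
          exact_mod_cast succ_ceil_pow_le hLε hN
      _ ≤ 3 ^ d * (L / ε) ^ (N * d) * 2 ^ N := le_mul_of_one_le_right (by positivity)
          (one_le_pow₀ one_le_two)
      _ = 3 ^ d * N.factorial * 2 ^ N * L ^ (N * d) / (ε ^ (N * d) * N.factorial) := by
          rw [div_pow]
          field_simp
end
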